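/- arXiv:1105.4687 — 2 statements merged into one kernel-verified Lean document; each statement's English description precedes it below -/
import Mathlib

section
/- The function $\beta(x) = \frac{|x|^{3/2} e^{-|x|}}{1+|x|^{3/2}}$ on $\mathbb{R}\setminus\{0\}$ is nonnegative, lies in $L^2(\mathbb{R})$, and satisfies for $x \neq 0$ the identity $-\beta''(x) + \frac{3}{4x^2}\beta(x) + \beta(x) = \frac{3|x|^{1/2}e^{-|x|}}{4(1+|x|^{3/2})^3}\left(|x|^2 + 4|x|^{3/2} + 7|x|^{1/2} + 4\right)$, and in particular the right-hand side is a nonnegative $L^2$ function. -/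
open MeasureTheory Real

noncomputable section

/-- The Kalf–Walter supersolution `β(x) = |x|^{3/2} e^{-|x|} / (1 + |x|^{3/2})`. -/
def kwBeta (x : ℝ) : ℝ := |x| ^ (3 / 2 : ℝ) * Real.exp (-|x|) / (1 + |x| ^ (3 / 2 : ℝ))

/-- The explicit right-hand side
`X(x) = (3 |x|^{1/2} e^{-|x|} / (4 (1+|x|^{3/2})³)) (|x|² + 4|x|^{3/2} + 7|x|^{1/2} + 4)`. -/
def kwX (x : ℝ) : ℝ :=
  3 * |x| ^ (1 / 2 : ℝ) * Real.exp (-|x|) / (4 * (1 + |x| ^ (3 / 2 : ℝ)) ^ 3) *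
    (|x| ^ 2 + 4 * |x| ^ (3 / 2 : ℝ) + 7 * |x| ^ (1 / 2 : ℝ) + 4)

/-!
`β` is even, hence so is `β''`, and it suffices to differentiate on `(0, ∞)`. There, with
`t = √x`, both `β` and `β'` are `e^{-x}` times rational functions of `t`, so the identity is a
rational-function identity in `t`. For square integrability, `β ≤ e^{-|x|}` and `X ≤ 12 e^{-|x|}`,
and `e^{-|x|} ≤ 2 / (1 + x²)` is integrable.
-/

open Topology

section EvenFunction

variable {𝕜 F : Type*} [NontriviallyNormedField 𝕜] [NormedAddCommGroup F] [NormedSpace 𝕜 F]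

theorem deriv_deriv_comp_neg (f : 𝕜 → F) (x : 𝕜) :
    deriv (deriv fun y => f (-y)) x = deriv (deriv f) (-x) := by
  rw [funext (deriv_comp_neg f), deriv.fun_neg, deriv_comp_neg, neg_neg]

theorem Function.Even.deriv_deriv_neg {f : 𝕜 → F} (hf : Function.Even f) (x : 𝕜) :
    deriv (deriv f) (-x) = deriv (deriv f) x := by
  conv_rhs => rw [← funext hf]
  exact (deriv_deriv_comp_neg f x).symm

end EvenFunction

def kwBetaPos (x : ℝ) : ℝ := √x ^ 3 * exp (-x) / (1 + √x ^ 3)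

def kwBetaPosDeriv (x : ℝ) : ℝ := exp (-x) * (3 / 2 * √x - √x ^ 3 - √x ^ 6) / (1 + √x ^ 3) ^ 2

theorem rpow_three_halves {x : ℝ} (hx : 0 ≤ x) : x ^ (3 / 2 : ℝ) = √x ^ 3 := by
  rw [Real.sqrt_eq_rpow, ← Real.rpow_mul_natCast hx]; norm_num

theorem kwBeta_eq_kwBetaPos_abs (x : ℝ) : kwBeta x = kwBetaPos |x| := by
  rw [kwBeta, kwBetaPos, rpow_three_halves (abs_nonneg x)]

theorem kwX_eq (x : ℝ) : kwX x = 3 * √|x| * exp (-|x|) / (4 * (1 + √|x| ^ 3) ^ 3) *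
    (|x| ^ 2 + 4 * √|x| ^ 3 + 7 * √|x| + 4) := by
  rw [kwX, rpow_three_halves (abs_nonneg x), ← Real.sqrt_eq_rpow]

theorem kwBeta_even : Function.Even kwBeta := fun x => by simp only [kwBeta, abs_neg]

theorem kwX_even : Function.Even kwX := fun x => by simp only [kwX, abs_neg]

theorem hasDerivAt_kwBetaPos {x : ℝ} (hx : 0 < x) :
    HasDerivAt kwBetaPos (kwBetaPosDeriv x) x := by
  have hs : √x ≠ 0 := (Real.sqrt_pos.2 hx).ne'
  have hcube := (Real.hasDerivAt_sqrt hx.ne').fun_pow 3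
  have hexp := (hasDerivAt_neg x).exp
  refine ((hcube.fun_mul hexp).fun_div (hcube.const_add 1) (by positivity)).congr_deriv ?_
  simp only [kwBetaPosDeriv]
  field_simp
  ring

theorem hasDerivAt_kwBetaPosDeriv {x : ℝ} (hx : 0 < x) :
    HasDerivAt kwBetaPosDeriv ((3 / (4 * x ^ 2) + 1) * kwBetaPos x - kwX x) x := by
  have hsqrt := Real.hasDerivAt_sqrt hx.ne'
  have hexp := (hasDerivAt_neg x).exp
  have hnum := ((hsqrt.const_mul (3 / 2)).fun_sub (hsqrt.fun_pow 3)).fun_sub (hsqrt.fun_pow 6)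
  have hden := ((hsqrt.fun_pow 3).const_add 1).fun_pow 2
  refine ((hexp.fun_mul hnum).fun_div hden (by positivity)).congr_deriv ?_
  obtain ⟨t, ht, rfl⟩ : ∃ t, 0 < t ∧ t ^ 2 = x := ⟨√x, Real.sqrt_pos.2 hx, Real.sq_sqrt hx.le⟩
  simp only [kwBetaPos, kwX_eq, abs_of_pos hx, Real.sqrt_sq ht.le]
  field_simp
  ring

theorem deriv_deriv_kwBeta_of_pos {x : ℝ} (hx : 0 < x) :
    deriv (deriv kwBeta) x = (3 / (4 * x ^ 2) + 1) * kwBeta x - kwX x := by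
  have hderiv : deriv kwBeta =ᶠ[𝓝 x] kwBetaPosDeriv := by
    filter_upwards [Ioi_mem_nhds hx] with y hy
    have hβ : kwBeta =ᶠ[𝓝 y] kwBetaPos := by
      filter_upwards [Ioi_mem_nhds hy] with z hz
      rw [kwBeta_eq_kwBetaPos_abs, abs_of_pos hz]
    rw [hβ.deriv_eq, (hasDerivAt_kwBetaPos hy).deriv]
  rw [hderiv.deriv_eq, (hasDerivAt_kwBetaPosDeriv hx).deriv, kwBeta_eq_kwBetaPos_abs,
    abs_of_pos hx]

theorem deriv_deriv_kwBeta {x : ℝ} (hx : x ≠ 0) :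
    deriv (deriv kwBeta) x = (3 / (4 * x ^ 2) + 1) * kwBeta x - kwX x := by
  rcases hx.lt_or_gt with hneg | hpos
  · rw [← kwBeta_even.deriv_deriv_neg, deriv_deriv_kwBeta_of_pos (neg_pos.2 hneg),
      kwBeta_even, kwX_even, neg_sq]
  · exact deriv_deriv_kwBeta_of_pos hpos

theorem exp_neg_abs_le_two_mul_inv_one_add_sq (x : ℝ) : exp (-|x|) ≤ 2 * (1 + x ^ 2)⁻¹ := by
  have h : (1 + x ^ 2) / 2 ≤ exp |x| := by
    nlinarith [Real.quadratic_le_exp_of_nonneg (abs_nonneg x), sq_abs x, abs_nonneg x]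
  rw [exp_neg, ← div_eq_mul_inv, ← inv_div]
  exact inv_anti₀ (by positivity) h

theorem memLp_exp_neg_abs : MemLp (fun x : ℝ => exp (-|x|)) 2 volume := by
  rw [memLp_two_iff_integrable_sq (by fun_prop)]
  refine (integrable_inv_one_add_sq.const_mul 2).mono' (by fun_prop) (ae_of_all _ fun x => ?_)
  have hle : exp (-|x|) ≤ 1 := exp_le_one_iff.2 (neg_nonpos.2 (abs_nonneg x))
  rw [norm_of_nonneg (by positivity)]
  nlinarith [exp_pos (-|x|), exp_neg_abs_le_two_mul_inv_one_add_sq x]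

theorem kwBeta_nonneg (x : ℝ) : 0 ≤ kwBeta x := by
  rw [kwBeta]; positivity

theorem kwX_nonneg (x : ℝ) : 0 ≤ kwX x := by
  rw [kwX]; positivity

theorem measurable_kwBeta : Measurable kwBeta := by
  unfold kwBeta; fun_prop

theorem measurable_kwX : Measurable kwX := by
  unfold kwX; fun_prop

theorem kwBeta_le_exp_neg_abs (x : ℝ) : kwBeta x ≤ exp (-|x|) := by
  rw [kwBeta_eq_kwBetaPos_abs, kwBetaPos, div_le_iff₀ (by positivity)]
  nlinarith [exp_pos (-|x|)]

theorem kwX_le_exp_neg_abs (x : ℝ) : kwX x ≤ 12 * exp (-|x|) := by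
  obtain ⟨s, hs, hx⟩ : ∃ s, 0 ≤ s ∧ |x| = s ^ 2 :=
    ⟨√|x|, Real.sqrt_nonneg _, (Real.sq_sqrt (abs_nonneg x)).symm⟩
  rw [kwX_eq, hx, Real.sqrt_sq hs, div_mul_eq_mul_div, div_le_iff₀ (by positivity)]
  have hpoly : s * (s ^ 4 + 4 * s ^ 3 + 7 * s + 4) ≤ 16 * (1 + s ^ 3) ^ 3 := by
    nlinarith [pow_nonneg hs 3, pow_nonneg hs 4, pow_nonneg hs 5, sq_nonneg (s - 1),
      pow_nonneg hs 9]
  nlinarith [exp_pos (-s ^ 2)]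

theorem memLp_kwBeta : MemLp kwBeta 2 volume := by
  refine memLp_exp_neg_abs.of_le_mul (c := 1) measurable_kwBeta.aestronglyMeasurable
    (ae_of_all _ fun x => ?_)
  rw [norm_of_nonneg (kwBeta_nonneg x), norm_of_nonneg (exp_pos _).le, one_mul]
  exact kwBeta_le_exp_neg_abs x

theorem memLp_kwX : MemLp kwX 2 volume := by
  refine memLp_exp_neg_abs.of_le_mul (c := 12) measurable_kwX.aestronglyMeasurable
    (ae_of_all _ fun x => ?_)
  rw [norm_of_nonneg (kwX_nonneg x), norm_of_nonneg (exp_pos _).le]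
  exact kwX_le_exp_neg_abs x

/-- The function `β` is nonnegative, lies in `L²(ℝ)`, and satisfies
`-β'' + (3/(4x²))β + β = X` for `x ≠ 0`, where `X` is nonnegative and in `L²`. -/
theorem stmt_11 :
    (∀ x : ℝ, 0 ≤ kwBeta x) ∧ MemLp kwBeta 2 (volume : Measure ℝ) ∧
    (∀ x : ℝ, x ≠ 0 →
      -deriv (deriv kwBeta) x + 3 / (4 * x ^ 2) * kwBeta x + kwBeta x = kwX x) ∧
    (∀ x : ℝ, 0 ≤ kwX x) ∧ MemLp kwX 2 (volume : Measure ℝ) := by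
  refine ⟨kwBeta_nonneg, memLp_kwBeta, fun x hx => ?_, kwX_nonneg, memLp_kwX⟩
  rw [deriv_deriv_kwBeta hx]
  ring

end
end

section
/- If a densely defined operator $T$ on $L^2(M,d\omega)$ with domain $C^\infty_0(\Omega_-) \oplus C^\infty_0(\Omega_+)$ (where $\Omega = \Omega_- \sqcup \Omega_+$ is a disjoint union of open sets) is essentially self-adjoint, then its unique self-adjoint extension $\overline{T}$ preserves the orthogonal decomposition $L^2 = L^2(\Omega_-) \oplus^\perp L^2(\Omega_+)$, and consequently for any $u_0 \in L^2(\Omega_+)$ the solution $u(t) = e^{it\overline{T}}u_0$ of the abstract Schrödinger equation remains supported in $\Omega_+$ for all $t \in \mathbb{R}$. -/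
/-!
The orthogonal projection `P` onto `K₊` maps the graph of `T` into itself, because the domain of
`T` splits along `K₋ ⊕ K₊` and `T` preserves both pieces. By continuity `P × P` then preserves
the closure of that graph, which is the graph of `T̄`; so `T̄` commutes with `P`, and hence with
`1 - P`. If `u` solves `u' = i T̄ u`, so does `w = (1 - P) u`, and the symmetry of `T̄` makes
`d/dt ‖w‖² = 2 Re ⟪w, i T̄ w⟫` vanish. Thus `‖w‖` is conserved, and it is `0` when `u 0 ∈ K₊`.
-/

open Set

namespace LinearPMap

section Graph

variable {R E F : Type*} [CommRing R] [AddCommGroup E] [Module R E] [AddCommGroup F] [Module R F]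

theorem exists_apply_eq_of_mapsTo_graph {T : E →ₗ.[R] F} {A : E → E} {B : F → F}
    (h : MapsTo (Prod.map A B) T.graph T.graph) (x : T.domain) :
    ∃ hx : A x ∈ T.domain, T ⟨A x, hx⟩ = B (T x) := by
  obtain ⟨y, hy₁, hy₂⟩ := T.mem_graph_iff.mp (h (T.mem_graph x))
  have hy : (y : E) = A x := hy₁
  exact ⟨hy ▸ y.2, (congrArg T (Subtype.ext hy.symm)).trans hy₂⟩

variable [TopologicalSpace R] [TopologicalSpace E] [TopologicalSpace F]
  [IsTopologicalAddGroup E] [IsTopologicalAddGroup F] [ContinuousSMul R E] [ContinuousSMul R F]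

/-- Not a tautology: `closure` returns a non-closable operator unchanged. -/
theorem isClosable_of_closure_isClosed {T : E →ₗ.[R] F} (h : T.closure.IsClosed) :
    T.IsClosable := by
  by_contra hT
  rw [closure_def' hT] at h
  exact hT h.isClosable

theorem IsClosable.mapsTo_closure_graph {T : E →ₗ.[R] F} (hT : T.IsClosable) {f : E × F → E × F}
    (hf : Continuous f) (h : MapsTo f T.graph T.graph) :
    MapsTo f T.closure.graph T.closure.graph := by
  rw [← hT.graph_closure_eq_closure_graph, Submodule.topologicalClosure_coe]
  exact h.closure hf

end Graph

section Projection

variable {𝕜 E : Type*} [RCLike 𝕜] [NormedAddCommGroup E] [InnerProductSpace 𝕜 E]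
  {K : Submodule 𝕜 E} [K.HasOrthogonalProjection] {T : E →ₗ.[𝕜] E}

theorem mapsTo_graph_starProjection (hdom : T.domain ≤ (T.domain ⊓ Kᗮ) ⊔ (T.domain ⊓ K))
    (hinv : ∀ x : T.domain, ((x : E) ∈ K → T x ∈ K) ∧ ((x : E) ∈ Kᗮ → T x ∈ Kᗮ)) :
    MapsTo (Prod.map K.starProjection K.starProjection) T.graph T.graph := by
  intro p hp
  obtain ⟨x, rfl⟩ := T.mem_graph_iff'.mp hp
  obtain ⟨a, ⟨ha, haK⟩, b, ⟨hb, hbK⟩, hab⟩ := Submodule.mem_sup.mp (hdom x.2)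
  have hx : x = ⟨a, ha⟩ + ⟨b, hb⟩ := Subtype.ext hab.symm
  have hTa : K.starProjection (T ⟨a, ha⟩) = 0 :=
    K.starProjection_apply_eq_zero_iff.mpr ((hinv _).2 haK)
  have hTb : K.starProjection (T ⟨b, hb⟩) = T ⟨b, hb⟩ :=
    Submodule.starProjection_eq_self_iff.mpr ((hinv _).1 hbK)
  rw [hx, T.map_add]
  simpa [K.starProjection_apply_eq_zero_iff.mpr haK,
    Submodule.starProjection_eq_self_iff.mpr hbK, hTa, hTb] using T.mem_graph ⟨b, hb⟩

theorem mapsTo_graph_starProjection_orthogonal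
    (h : MapsTo (Prod.map K.starProjection K.starProjection) T.graph T.graph) :
    MapsTo (Prod.map Kᗮ.starProjection Kᗮ.starProjection) T.graph T.graph := by
  intro p hp
  simpa [K.starProjection_orthogonal] using T.graph.sub_mem hp (h hp)

theorem apply_mem_of_mapsTo_graph_starProjection
    (h : MapsTo (Prod.map K.starProjection K.starProjection) T.graph T.graph) (x : T.domain) :
    ((x : E) ∈ K → T x ∈ K) ∧ ((x : E) ∈ Kᗮ → T x ∈ Kᗮ) := by
  obtain ⟨hx, hTx⟩ := exists_apply_eq_of_mapsTo_graph h x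
  constructor
  · intro hxK
    rw [← Submodule.starProjection_eq_self_iff, ← hTx]
    congr
    exact Submodule.starProjection_eq_self_iff.mpr hxK
  · intro hxK
    rw [← K.starProjection_apply_eq_zero_iff, ← hTx]
    have hPx : (⟨_, hx⟩ : T.domain) = 0 :=
      Subtype.ext (K.starProjection_apply_eq_zero_iff.mpr hxK)
    rw [hPx, T.map_zero]

end Projection

theorem _root_.IsSelfAdjoint.isFormalAdjoint {𝕜 E : Type*} [RCLike 𝕜] [NormedAddCommGroup E]
    [InnerProductSpace 𝕜 E] [CompleteSpace E] {A : E →ₗ.[𝕜] E} (hA : IsSelfAdjoint A) :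
    A.IsFormalAdjoint A := by
  have h := adjoint_isFormalAdjoint hA.dense_domain
  rwa [isSelfAdjoint_def.mp hA] at h

section Schrodinger

variable {H : Type*} [NormedAddCommGroup H] [InnerProductSpace ℂ H] {S : H →ₗ.[ℂ] H}

def SolvesSchrodinger (S : H →ₗ.[ℂ] H) (u : ℝ → H) : Prop :=
  ∀ t, ∃ hu : u t ∈ S.domain, HasDerivAt u (Complex.I • S ⟨u t, hu⟩) t

theorem IsFormalAdjoint.inner_self_apply_im (hS : S.IsFormalAdjoint S) (x : S.domain) :
    (inner ℂ (x : H) (S x)).im = 0 := by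
  rw [← Complex.conj_eq_iff_im, inner_conj_symm]
  exact hS x x

theorem SolvesSchrodinger.comp_of_mapsTo_graph {u : ℝ → H} (hu : S.SolvesSchrodinger u)
    {A : H →L[ℂ] H} (hA : MapsTo (Prod.map A A) S.graph S.graph) :
    S.SolvesSchrodinger (A ∘ u) := by
  intro t
  obtain ⟨hut, hderiv⟩ := hu t
  obtain ⟨hAut, hSA⟩ := exists_apply_eq_of_mapsTo_graph hA ⟨u t, hut⟩
  exact ⟨hAut, ((A.restrictScalars ℝ).hasFDerivAt.comp_hasDerivAt t hderiv).congr_deriv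
    ((A.map_smul _ _).trans (congrArg (Complex.I • ·) hSA).symm)⟩

theorem SolvesSchrodinger.norm_eq (hS : S.IsFormalAdjoint S) {u : ℝ → H}
    (hu : S.SolvesSchrodinger u) (t : ℝ) : ‖u t‖ = ‖u 0‖ := by
  -- `HasDerivAt.norm_sq` is stated for real inner product spaces, and this structure is no instance
  let _ := InnerProductSpace.complexToReal (G := H)
  have hconst : ∀ s, HasDerivAt (‖u ·‖ ^ 2) 0 s := by
    intro s
    obtain ⟨hus, hderiv⟩ := hu s
    convert hderiv.norm_sq using 1
    rw [real_inner_eq_re_inner, inner_smul_right]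
    simp [hS.inner_self_apply_im ⟨u s, hus⟩]
  have := is_const_of_deriv_eq_zero (fun s => (hconst s).differentiableAt)
    (fun s => (hconst s).deriv) t 0
  exact (pow_left_inj₀ (norm_nonneg _) (norm_nonneg _) two_ne_zero).mp this

end Schrodinger

end LinearPMap

theorem stmt_19_general {H : Type*} [NormedAddCommGroup H] [InnerProductSpace ℂ H] [CompleteSpace H]
    (Kp : Submodule ℂ H) (hKp : IsClosed (Kp : Set H))
    (T : H →ₗ.[ℂ] H)
    (hdom : T.domain = (T.domain ⊓ Kpᗮ) ⊔ (T.domain ⊓ Kp))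
    (hinv : ∀ u : T.domain, ((u : H) ∈ Kp → T u ∈ Kp) ∧ ((u : H) ∈ Kpᗮ → T u ∈ Kpᗮ))
    (hessa : IsSelfAdjoint T.closure) :
    (∀ u : T.closure.domain, ((u : H) ∈ Kp → T.closure u ∈ Kp) ∧
      ((u : H) ∈ Kpᗮ → T.closure u ∈ Kpᗮ)) ∧
    (∀ (u : ℝ → H) (hu : ∀ t, u t ∈ T.closure.domain),
      (∀ t, HasDerivAt u (Complex.I • T.closure ⟨u t, hu t⟩) t) →
      u 0 ∈ Kp → ∀ t, u t ∈ Kp) := by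
  have : CompleteSpace Kp := hKp.completeSpace_coe
  have hP : MapsTo (Prod.map Kp.starProjection Kp.starProjection)
      T.closure.graph T.closure.graph :=
    (LinearPMap.isClosable_of_closure_isClosed hessa.isClosed).mapsTo_closure_graph
      (by fun_prop) (LinearPMap.mapsTo_graph_starProjection hdom.le hinv)
  refine ⟨LinearPMap.apply_mem_of_mapsTo_graph_starProjection hP, ?_⟩
  intro u hu hderiv hu₀ t
  have hsol : T.closure.SolvesSchrodinger (Kpᗮ.starProjection ∘ u) :=
    LinearPMap.SolvesSchrodinger.comp_of_mapsTo_graph (fun t => ⟨hu t, hderiv t⟩)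
      (LinearPMap.mapsTo_graph_starProjection_orthogonal hP)
  have hnorm := hsol.norm_eq hessa.isFormalAdjoint t
  rwa [Function.comp_apply, Function.comp_apply,
    Submodule.starProjection_orthogonal_apply_eq_zero hu₀, norm_zero, norm_eq_zero,
    Kpᗮ.starProjection_apply_eq_zero_iff, Kp.orthogonal_orthogonal] at hnorm

/-- Dynamical confinement: let `H = K₋ ⊕⊥ K₊` (with `K₋ = K₊ᗮ`), and let `T` be a densely
defined operator whose domain splits along the decomposition and which maps each part into
the corresponding subspace. If `T` is essentially self-adjoint, then its unique self-adjoint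
extension `T̄` preserves the orthogonal decomposition, and every solution
`u' = i T̄ u` of the abstract Schrödinger equation starting in `K₊` stays in `K₊` forever. -/
theorem stmt_19 {H : Type*} [NormedAddCommGroup H] [InnerProductSpace ℂ H] [CompleteSpace H]
    (Kp : Submodule ℂ H) (hKp : IsClosed (Kp : Set H))
    (T : H →ₗ.[ℂ] H)
    (hdense : Dense (T.domain : Set H))
    (hdom : T.domain = (T.domain ⊓ Kpᗮ) ⊔ (T.domain ⊓ Kp))
    (hinv : ∀ u : T.domain, ((u : H) ∈ Kp → T u ∈ Kp) ∧ ((u : H) ∈ Kpᗮ → T u ∈ Kpᗮ))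
    (hessa : IsSelfAdjoint T.closure) :
    (∀ u : T.closure.domain, ((u : H) ∈ Kp → T.closure u ∈ Kp) ∧
      ((u : H) ∈ Kpᗮ → T.closure u ∈ Kpᗮ)) ∧
    (∀ (u : ℝ → H) (hu : ∀ t, u t ∈ T.closure.domain),
      (∀ t, HasDerivAt u (Complex.I • T.closure ⟨u t, hu t⟩) t) →
      u 0 ∈ Kp → ∀ t, u t ∈ Kp) :=
  stmt_19_general Kp hKp T hdom hinv hessa
end
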